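/- arXiv:2410.21835 — 5 statements merged into one kernel-verified Lean document; each statement's English description precedes it below -/
import Mathlib

section
/- Let $0 < s < 1$, $K > 1$, and $x \ge y \ge 0$ with $|x - y| \le x/K$. Then $|x^s - y^s| \le \frac{s}{(K-1)^{1-s}} |x-y|^s$. -/
theorem stmt_1 (s K x y : ℝ) (hs0 : 0 < s) (hs1 : s < 1) (hK : 1 < K)
    (hy : 0 ≤ y) (hxy : y ≤ x) (hclose : |x - y| ≤ x / K) :
    |x ^ s - y ^ s| ≤ s / (K - 1) ^ (1 - s) * |x - y| ^ s := by
  obtain ⟨d, hd⟩ : ∃ d, d = x - y := ⟨x - y, rfl⟩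
  rw [← hd] at hclose ⊢
  have hd0 : 0 ≤ d := by rw [hd]; linarith
  have hdsub : y + d = x := by rw [hd]; ring
  rw [abs_of_nonneg hd0] at hclose ⊢
  rcases eq_or_lt_of_le hd0 with h0 | hdpos
  · have hx : x = y := by have := hd ▸ h0; linarith
    simp [hx, ← h0, Real.zero_rpow hs0.ne']
  -- y ≥ (K-1) * d
  have hK0 : 0 < K - 1 := by linarith
  have hxK : K * d ≤ x := by
    rw [le_div_iff₀ (by linarith : (0:ℝ) < K)] at hclose
    linarith
  have hyd : (K - 1) * d ≤ y := by nlinarith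
  have hy0 : 0 < y := lt_of_lt_of_le (by positivity) hyd
  have hx0 : 0 < x := lt_of_lt_of_le hy0 (by linarith)
  -- x^s - y^s ≤ s * d * y^(s-1)
  have hxs : x ^ s ≤ y ^ s + s * d * y ^ (s - 1) := by
    have hb : (1 + d / y) ^ s ≤ 1 + s * (d / y) :=
      rpow_one_add_le_one_add_mul_self (by have := div_nonneg hd0 hy0.le; linarith) hs0.le hs1.le
    have hxe : x = y * (1 + d / y) := by field_simp; linarith
    calc x ^ s = y ^ s * (1 + d / y) ^ s := by
          rw [hxe, Real.mul_rpow hy0.le (by have := div_nonneg hd0 hy0.le; linarith)]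
      _ ≤ y ^ s * (1 + s * (d / y)) := by
          exact mul_le_mul_of_nonneg_left hb (by positivity)
      _ = y ^ s + s * d * y ^ (s - 1) := by
          rw [Real.rpow_sub hy0, Real.rpow_one]
          field_simp
  have habs : x ^ s - y ^ s ≥ 0 := by
    have := Real.rpow_le_rpow hy0.le hxy hs0.le
    linarith
  rw [abs_of_nonneg habs]
  have hkey : s * d * y ^ (s - 1) ≤ s / (K - 1) ^ (1 - s) * d ^ s := by
    have h1 : ((K - 1) * d) ^ (s - 1) ≥ y ^ (s - 1) := by
      apply Real.rpow_le_rpow_of_nonpos (by positivity) hyd (by linarith)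
    have h2 : ((K - 1) * d) ^ (s - 1) = (K - 1) ^ (s - 1) * d ^ (s - 1) :=
      Real.mul_rpow hK0.le hdpos.le
    have h3 : (K - 1) ^ (s - 1) = ((K - 1) ^ (1 - s))⁻¹ := by
      rw [← Real.rpow_neg hK0.le]; ring_nf
    have h4 : d * d ^ (s - 1) = d ^ s := by
      rw [← Real.rpow_one_add' hdpos.le (by linarith)]; ring_nf
    calc s * d * y ^ (s - 1) ≤ s * d * ((K - 1) * d) ^ (s - 1) := by
          apply mul_le_mul_of_nonneg_left h1 (by positivity)
      _ = s / (K - 1) ^ (1 - s) * d ^ s := by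
          rw [h2, h3, ← h4]; field_simp
  linarith
end

section
/- Let $0 < s < 1$ and $x \ge y \ge 0$ with $x > 0$. Then $(x+y)^s \le \left(\frac{x}{x+y}\right)^{1-s}(x^s + y^s)$. -/
theorem stmt_2 (s x y : ℝ) (hs0 : 0 < s) (hs1 : s < 1)
    (hy : 0 ≤ y) (hxy : y ≤ x) (hx : 0 < x) :
    (x + y) ^ s ≤ (x / (x + y)) ^ (1 - s) * (x ^ s + y ^ s) := by
  have hxy0 : 0 < x + y := by linarith
  rw [Real.div_rpow hx.le hxy0.le, div_mul_eq_mul_div,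
    le_div_iff₀ (Real.rpow_pos_of_pos hxy0 _), mul_comm ((x+y)^s), ← Real.rpow_add hxy0]
  have h1 : (1 - s) + s = 1 := by ring
  rw [h1, Real.rpow_one]
  have key : y ≤ x ^ (1 - s) * y ^ s := by
    have h2 : y ^ (1-s) ≤ x ^ (1-s) := Real.rpow_le_rpow hy hxy (by linarith)
    have : y ^ (1-s) * y ^ s ≤ x ^ (1-s) * y ^ s :=
      mul_le_mul_of_nonneg_right h2 (Real.rpow_nonneg hy s)
    calc y = y ^ ((1-s) + s) := by rw [h1, Real.rpow_one]
      _ = y ^ (1-s) * y ^ s := Real.rpow_add' hy (by simp [h1])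
      _ ≤ _ := this
  have hx1 : x ^ (1-s) * x ^ s = x := by
    rw [← Real.rpow_add hx, h1, Real.rpow_one]
  nlinarith [key, hx1]
end

section
/- Let $0 < s < 1$, $K \ge 1$, and $y \le x \le K y$ with $y > 0$. Then $(x+y)^s \le \left(\frac{K}{1+K}\right)^{1-s}(x^s + y^s)$. -/
/-!
Put `c = K (x + y) / (1 + K)`. Both `x ≤ c` (this is `x ≤ K y`) and `y ≤ c` (as `y ≤ x ≤ K x`),
and `a ≤ a ^ s * c ^ (1 - s)` whenever `0 ≤ a ≤ c`. Adding the two instances gives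
`x + y ≤ (K / (1 + K)) ^ (1 - s) * (x + y) ^ (1 - s) * (x ^ s + y ^ s)`;
dividing by `(x + y) ^ (1 - s)` is the claim.
-/

open Real

theorem Real.le_rpow_mul_rpow_one_sub {a c s : ℝ} (ha : 0 ≤ a) (hac : a ≤ c) (hs : s ≤ 1) :
    a ≤ a ^ s * c ^ (1 - s) :=
  calc a = a ^ s * a ^ (1 - s) := by
        rw [← rpow_add' ha (by norm_num), add_sub_cancel, rpow_one]
    _ ≤ a ^ s * c ^ (1 - s) := by gcongr

theorem stmt_3_general (s K x y : ℝ) (hs1 : s < 1) (hK : 1 ≤ K)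
    (hy : 0 < y) (hyx : y ≤ x) (hxK : x ≤ K * y) :
    (x + y) ^ s ≤ (K / (1 + K)) ^ (1 - s) * (x ^ s + y ^ s) := by
  have hxy : 0 < x + y := by linarith
  have hK1 : 0 < 1 + K := by linarith
  set c := K / (1 + K) * (x + y) with hc
  have hxc : x ≤ c := by rw [hc, div_mul_eq_mul_div, le_div_iff₀ hK1]; linarith
  have hyc : y ≤ c := by rw [hc, div_mul_eq_mul_div, le_div_iff₀ hK1]; nlinarith
  have key : x + y ≤ (K / (1 + K)) ^ (1 - s) * (x ^ s + y ^ s) * (x + y) ^ (1 - s) :=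
    calc x + y ≤ x ^ s * c ^ (1 - s) + y ^ s * c ^ (1 - s) :=
          add_le_add (le_rpow_mul_rpow_one_sub (by linarith) hxc hs1.le)
            (le_rpow_mul_rpow_one_sub hy.le hyc hs1.le)
      _ = (K / (1 + K)) ^ (1 - s) * (x ^ s + y ^ s) * (x + y) ^ (1 - s) := by
          rw [hc, mul_rpow (by positivity) hxy.le]; ring
  rwa [← mul_le_mul_iff_of_pos_right (rpow_pos_of_pos hxy (1 - s)), ← rpow_add hxy,
    add_sub_cancel, rpow_one]

theorem stmt_3 (s K x y : ℝ) (hs0 : 0 < s) (hs1 : s < 1) (hK : 1 ≤ K)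
    (hy : 0 < y) (hyx : y ≤ x) (hxK : x ≤ K * y) :
    (x + y) ^ s ≤ (K / (1 + K)) ^ (1 - s) * (x ^ s + y ^ s) :=
  stmt_3_general s K x y hs1 hK hy hyx hxK
end

section
/- For all real $t \ge 0$, integers $k \neq 0$, $l$ with $k \neq l$, and reals $\eta, \xi$, one has $\frac{|k-l|}{\sqrt{(k-l)^2 + (\eta-\xi-(k-l)t)^2}} \cdot \frac{|k-l|}{\sqrt{(k-l)^2 + (\eta-\xi)^2}} \le \frac{C}{\sqrt{1+t^2}}$ for some absolute constant $C$. -/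
lemma stmt_4_aux (m x : ℝ) : |m| + |x| ≤ Real.sqrt 2 * Real.sqrt (m^2 + x^2) := by
  rw [← Real.sqrt_mul (by norm_num)]
  calc |m| + |x| = Real.sqrt ((|m| + |x|)^2) := (Real.sqrt_sq (by positivity)).symm
    _ ≤ _ := Real.sqrt_le_sqrt (by nlinarith [sq_abs m, sq_abs x, sq_nonneg (|m| - |x|)])

theorem stmt_4 :
    ∃ C : ℝ, 0 < C ∧
      ∀ (t : ℝ) (k l : ℤ) (η ξ : ℝ), 0 ≤ t → k ≠ 0 → k ≠ l →
        (|(k : ℝ) - l| / Real.sqrt (((k : ℝ) - l) ^ 2 + (η - ξ - ((k : ℝ) - l) * t) ^ 2)) *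
          (|(k : ℝ) - l| / Real.sqrt (((k : ℝ) - l) ^ 2 + (η - ξ) ^ 2))
        ≤ C / Real.sqrt (1 + t ^ 2) := by
  refine ⟨2, by norm_num, ?_⟩
  intro t k l η ξ ht hk hkl
  set m : ℝ := (k : ℝ) - l with hm
  have hm0 : m ≠ 0 := sub_ne_zero.mpr (by exact_mod_cast hkl)
  set x : ℝ := η - ξ - m * t with hx
  set y : ℝ := η - ξ with hy
  have hA : (0:ℝ) < Real.sqrt (m^2 + x^2) := Real.sqrt_pos.mpr (by positivity)
  have hB : (0:ℝ) < Real.sqrt (m^2 + y^2) := Real.sqrt_pos.mpr (by positivity)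
  have hs : (0:ℝ) < Real.sqrt (1 + t^2) := Real.sqrt_pos.mpr (by positivity)
  -- triangle inequality: |m| * t ≤ |x| + |y|
  have htri : |m| * t ≤ |x| + |y| := by
    have : |m * t| ≤ |x| + |y| := by
      have : m * t = y - x := by rw [hx]; ring
      rw [this]
      exact (abs_sub y x).trans_eq (add_comm _ _)
    rwa [abs_mul, abs_of_nonneg ht] at this
  have hst : Real.sqrt (1 + t^2) ≤ 1 + t := by
    calc Real.sqrt (1 + t^2) ≤ Real.sqrt ((1+t)^2) := Real.sqrt_le_sqrt (by nlinarith)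
      _ = 1 + t := Real.sqrt_sq (by linarith)
  have key : m^2 * Real.sqrt (1 + t^2) ≤ 2 * (Real.sqrt (m^2 + x^2) * Real.sqrt (m^2 + y^2)) := by
    have h1 := stmt_4_aux m x
    have h2 := stmt_4_aux m y
    have hprod : (|m| + |x|) * (|m| + |y|) ≤ 2 * (Real.sqrt (m^2 + x^2) * Real.sqrt (m^2 + y^2)) := by
      calc (|m| + |x|) * (|m| + |y|)
          ≤ (Real.sqrt 2 * Real.sqrt (m^2 + x^2)) * (Real.sqrt 2 * Real.sqrt (m^2 + y^2)) :=
            mul_le_mul h1 h2 (by positivity) (by positivity)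
        _ = (Real.sqrt 2 * Real.sqrt 2) * (Real.sqrt (m^2 + x^2) * Real.sqrt (m^2 + y^2)) := by ring
        _ = 2 * (Real.sqrt (m^2 + x^2) * Real.sqrt (m^2 + y^2)) := by
            rw [Real.mul_self_sqrt (by norm_num)]
    have hm2 : m^2 = |m| * |m| := by rw [abs_mul_abs_self, sq]
    nlinarith [abs_nonneg m, abs_nonneg x, abs_nonneg y,
      mul_le_mul_of_nonneg_left htri (abs_nonneg m),
      mul_le_mul_of_nonneg_left hst (sq_nonneg m)]
  rw [div_mul_div_comm, div_le_div_iff₀ (by positivity) hs]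
  calc |m| * |m| * Real.sqrt (1 + t^2) = m^2 * Real.sqrt (1 + t^2) := by
        rw [abs_mul_abs_self]; ring
    _ ≤ 2 * (Real.sqrt (m^2 + x^2) * Real.sqrt (m^2 + y^2)) := key
end

section
/- For every $c \in (0,1]$ and every $y \ge 0$, one has $\sinh(c \cdot \mathrm{arsinh}(y)) \ge \frac{c}{2} \, y^{c}$, where $\mathrm{arsinh}$ is the inverse hyperbolic sine. (It suffices to prove this for $y \ge 1$.) -/
theorem stmt_6 (c y : ℝ) (hc0 : 0 < c) (hc1 : c ≤ 1) (hy : 1 ≤ y) :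
    c / 2 * y ^ c ≤ Real.sinh (c * Real.arsinh y) := by
  have hy0 : 0 < y := lt_of_lt_of_le one_pos hy
  set t := Real.arsinh y with ht
  -- exp t = y + sqrt (1 + y^2) ≥ 2y
  have hexp : Real.exp t = y + Real.sqrt (1 + y ^ 2) := Real.exp_arsinh y
  have hsqrt : y ≤ Real.sqrt (1 + y ^ 2) := by
    rw [show (1 + y ^ 2 : ℝ) = y ^ 2 + 1 by ring]
    nlinarith [Real.sq_sqrt (by positivity : (0:ℝ) ≤ y ^ 2 + 1),
      Real.sqrt_nonneg (y ^ 2 + 1)]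
  have h2y : 2 * y ≤ Real.exp t := by rw [hexp]; linarith
  have h2y0 : (0:ℝ) < 2 * y := by linarith
  -- exp (c*t) = (exp t)^c
  have hect : Real.exp (c * t) = Real.exp t ^ c := by
    rw [← Real.exp_log (Real.exp_pos t), Real.log_exp, ← Real.exp_mul, mul_comm]
  have hectn : Real.exp (-(c * t)) = (Real.exp t ^ c)⁻¹ := by
    rw [Real.exp_neg, hect]
  -- lower bound exp(c*t)
  have h1 : (2 * y) ^ c ≤ Real.exp (c * t) := by
    rw [hect]; exact Real.rpow_le_rpow h2y0.le h2y hc0.le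
  -- upper bound exp(-(c*t))
  have h2 : Real.exp (-(c * t)) ≤ ((2 * y) ^ c)⁻¹ := by
    rw [hectn]
    apply inv_anti₀ (Real.rpow_pos_of_pos h2y0 c)
    exact Real.rpow_le_rpow h2y0.le h2y hc0.le
  -- algebra: (2y)^c = 2^c * y^c
  have hmul : (2 * y) ^ c = (2:ℝ) ^ c * y ^ c :=
    Real.mul_rpow (by norm_num) hy0.le
  have hyc1 : (1:ℝ) ≤ y ^ c := Real.one_le_rpow hy hc0.le
  have h2c1 : (1:ℝ) ≤ (2:ℝ) ^ c := Real.one_le_rpow (by norm_num) hc0.le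
  have hyc0 : (0:ℝ) < y ^ c := lt_of_lt_of_le one_pos hyc1
  have h2c0 : (0:ℝ) < (2:ℝ) ^ c := lt_of_lt_of_le one_pos h2c1
  -- ((2y)^c)⁻¹ = (2^c)⁻¹ * (y^c)⁻¹ ≤ (2^c)⁻¹ * y^c
  have h3 : ((2 * y) ^ c)⁻¹ ≤ ((2:ℝ) ^ c)⁻¹ * y ^ c := by
    rw [hmul, mul_inv]
    have : (y ^ c)⁻¹ ≤ y ^ c := by
      calc (y ^ c)⁻¹ ≤ 1 := inv_le_one_of_one_le₀ hyc1
      _ ≤ y ^ c := hyc1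
    exact mul_le_mul_of_nonneg_left this (inv_nonneg.mpr h2c0.le)
  -- key scalar inequality: c ≤ 2^c - (2^c)⁻¹
  have hkey : c ≤ (2:ℝ) ^ c - ((2:ℝ) ^ c)⁻¹ := by
    have hl2 : (0.6931471803 : ℝ) < Real.log 2 := Real.log_two_gt_d9
    have hpos : 0 < c * Real.log 2 := by positivity
    have hs := Real.self_lt_sinh_iff.mpr hpos
    rw [Real.sinh_eq] at hs
    have he : Real.exp (c * Real.log 2) = (2:ℝ) ^ c := by
      rw [Real.rpow_def_of_pos (by norm_num : (0:ℝ) < 2), mul_comm]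
    have hen : Real.exp (-(c * Real.log 2)) = ((2:ℝ) ^ c)⁻¹ := by
      rw [Real.exp_neg, he]
    rw [he, hen] at hs
    nlinarith
  -- put it together
  rw [Real.sinh_eq]
  have : c * y ^ c ≤ Real.exp (c * t) - Real.exp (-(c * t)) := by
    calc c * y ^ c ≤ ((2:ℝ) ^ c - ((2:ℝ) ^ c)⁻¹) * y ^ c := by
          exact mul_le_mul_of_nonneg_right hkey hyc0.le
    _ = (2:ℝ) ^ c * y ^ c - ((2:ℝ) ^ c)⁻¹ * y ^ c := by ring
    _ ≤ Real.exp (c * t) - Real.exp (-(c * t)) := by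
        have := hmul ▸ h1
        have h4 : Real.exp (-(c * t)) ≤ ((2:ℝ) ^ c)⁻¹ * y ^ c := le_trans h2 h3
        linarith
  linarith
end
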